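/- arXiv:2403.16519 — 7 statements merged into one kernel-verified Lean document; each statement's English description precedes it below -/
import Mathlib

section
/- Let k be a field of characteristic 0 with algebraic closure L, and let I ⊆ k[x_1,…,x_n] be a zero-dimensional ideal (i.e. k[x_1,…,x_n]/I is finite-dimensional over k). For any t ∈ k[x_1,…,x_n], the set of roots in L of the characteristic polynomial of the multiplication map m_t on k[x_1,…,x_n]/I is exactly {t(p) : p ∈ V_L(I)}. -/
set_option maxHeartbeats 1000000
set_option synthInstance.maxHeartbeats 400000

open Polynomial in
lemma eval_charpoly_det {F V : Type*} [Field F] [AddCommGroup V] [Module F V]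
    [Module.Finite F V] (f : V →ₗ[F] V) (x : F) :
    (LinearMap.charpoly f).eval x = LinearMap.det (x • LinearMap.id - f) := by
  let bb := Module.Free.chooseBasis F V
  rw [← LinearMap.charpoly_toMatrix f bb, Matrix.charpoly]
  have h1 : (evalRingHom x) (Matrix.charmatrix (LinearMap.toMatrix bb bb f)).det
      = ((Matrix.charmatrix (LinearMap.toMatrix bb bb f)).map (evalRingHom x)).det :=
    RingHom.map_det _ _
  have h2 : (Matrix.charmatrix (LinearMap.toMatrix bb bb f)).map (evalRingHom x)
      = LinearMap.toMatrix bb bb (x • LinearMap.id - f) := by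
    ext i j
    by_cases h : i = j
    · subst h
      simp [Matrix.charmatrix_apply_eq, Matrix.map_apply, LinearMap.toMatrix_apply]
    · simp [Matrix.charmatrix_apply_ne _ _ _ h, Matrix.map_apply, LinearMap.toMatrix_apply,
        Module.Basis.repr_self, Finsupp.single_apply, h, Ne.symm h]
  calc (Matrix.charmatrix (LinearMap.toMatrix bb bb f)).det.eval x
      = (evalRingHom x) (Matrix.charmatrix (LinearMap.toMatrix bb bb f)).det := rfl
    _ = LinearMap.det (x • LinearMap.id - f) := by
        rw [h1, h2, LinearMap.det_toMatrix]

open Polynomial in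
lemma charpoly_root_nonunit {F B : Type*} [Field F] [CommRing B] [Algebra F B]
    [Module.Finite F B] {b : B} {x : F}
    (h : (LinearMap.charpoly (LinearMap.mulLeft F b)).eval x = 0) :
    ¬ IsUnit (algebraMap F B x - b) := by
  intro hu
  have h1 : LinearMap.mulLeft F (algebraMap F B x - b)
      = x • LinearMap.id - LinearMap.mulLeft F b := by
    ext y
    simp [sub_mul, Algebra.smul_def]
  have h2 : LinearMap.det (LinearMap.mulLeft F (algebraMap F B x - b)) = 0 := by
    rw [h1, ← eval_charpoly_det, h]
  have h3 : Algebra.lmul F B (algebraMap F B x - b) = LinearMap.mulLeft F (algebraMap F B x - b) :=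
    LinearMap.ext fun y => rfl
  have h4 : IsUnit (Algebra.lmul F B (algebraMap F B x - b)) :=
    (Algebra.lmul_isUnit_iff).mpr hu
  rw [h3] at h4
  have h5 : IsUnit (LinearMap.det (LinearMap.mulLeft F (algebraMap F B x - b))) :=
    h4.map LinearMap.det
  rw [h2] at h5
  exact not_isUnit_zero h5

lemma key_exists_hom {k L : Type} [Field k] [Field L] [Algebra k L] [IsAlgClosed L]
    (A : Type) [CommRing A] [Algebra k A] [Module.Finite k A] (a : A) (x : L)
    (hx : Polynomial.aeval x (LinearMap.charpoly (LinearMap.mulLeft k a)) = 0) :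
    ∃ φ : A →ₐ[k] L, φ a = x := by
  have hBC : (LinearMap.mulLeft k a).baseChange L
      = LinearMap.mulLeft L ((1 : L) ⊗ₜ[k] a) := by
    apply LinearMap.ext
    intro z
    induction z using TensorProduct.induction_on with
    | zero => rw [map_zero, map_zero]
    | tmul c m => simp [Algebra.TensorProduct.tmul_mul_tmul]
    | add u v hu hv => rw [map_add, map_add, hu, hv]
  have heval : ((LinearMap.baseChange L (LinearMap.mulLeft k a)).charpoly).eval x = 0 := by
    rw [LinearMap.charpoly_baseChange, Polynomial.eval_map, ← Polynomial.aeval_def]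
    exact hx
  rw [hBC] at heval
  have hnon : ¬ IsUnit (algebraMap L (TensorProduct k L A) x - (1 : L) ⊗ₜ[k] a) :=
    charpoly_root_nonunit heval
  obtain ⟨m, hm, hmem⟩ := exists_max_ideal_of_mem_nonunits hnon
  haveI := hm
  haveI := hm.isPrime
  haveI : Module.Finite L (TensorProduct k L A ⧸ m) :=
    Module.Finite.of_surjective (Ideal.Quotient.mkₐ L m).toLinearMap
      Ideal.Quotient.mk_surjective
  have hsurj : Function.Surjective (algebraMap L (TensorProduct k L A ⧸ m)) :=
    IsAlgClosed.algebraMap_bijective_of_isIntegral.2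
  let e : L ≃ₐ[L] (TensorProduct k L A ⧸ m) :=
    AlgEquiv.ofBijective (Algebra.ofId L _) ⟨(algebraMap L _).injective, hsurj⟩
  let φL : TensorProduct k L A →ₐ[L] L := (e.symm.toAlgHom).comp (Ideal.Quotient.mkₐ L m)
  have hφb : φL ((1 : L) ⊗ₜ[k] a) = x := by
    have h0 : φL (algebraMap L (TensorProduct k L A) x - (1 : L) ⊗ₜ[k] a) = 0 := by
      show e.symm (Ideal.Quotient.mkₐ L m _) = 0
      rw [Ideal.Quotient.mkₐ_eq_mk, Ideal.Quotient.eq_zero_iff_mem.mpr hmem, map_zero]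
    rw [map_sub, AlgHom.commutes] at h0
    have hxx : algebraMap L L x = x := rfl
    rw [hxx] at h0
    exact (sub_eq_zero.mp h0).symm
  refine ⟨(φL.restrictScalars k).comp (Algebra.TensorProduct.includeRight), ?_⟩
  simpa using hφb

/-- For a zero-dimensional ideal `I ⊆ k[x_1,…,x_n]` over a field `k` of
characteristic 0 with algebraic closure `L`, and any `t ∈ k[X]`, the set of roots in `L`
of the characteristic polynomial of the multiplication map `m_t` on `k[X]/I` is exactly
`{t(p) : p ∈ V_L(I)}`. -/
theorem stmt_0 (k L : Type) [Field k] [CharZero k] [Field L] [Algebra k L]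
    [IsAlgClosure k L] (n : ℕ) (I : Ideal (MvPolynomial (Fin n) k))
    [FiniteDimensional k (MvPolynomial (Fin n) k ⧸ I)]
    (t : MvPolynomial (Fin n) k) :
    {x : L | Polynomial.aeval x
        (LinearMap.charpoly (LinearMap.mulLeft k ((Ideal.Quotient.mk I) t))) = 0}
      = (fun p : Fin n → L => MvPolynomial.aeval p t) ''
        {p : Fin n → L | ∀ f ∈ I, MvPolynomial.aeval p f = 0} := by
  have : IsAlgClosed L := IsAlgClosure.isAlgClosed k
  ext x
  simp only [Set.mem_setOf_eq, Set.mem_image]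
  constructor
  · intro hx
    obtain ⟨φ, hφ⟩ := key_exists_hom (MvPolynomial (Fin n) k ⧸ I) (Ideal.Quotient.mk I t) x hx
    have hcomp : (MvPolynomial.aeval
        (fun i => φ (Ideal.Quotient.mk I (MvPolynomial.X i))) :
          MvPolynomial (Fin n) k →ₐ[k] L) = φ.comp (Ideal.Quotient.mkₐ k I) := by
      apply MvPolynomial.algHom_ext
      intro i
      simp
    refine ⟨fun i => φ (Ideal.Quotient.mk I (MvPolynomial.X i)), ?_, ?_⟩
    · intro f hf
      have := DFunLike.congr_fun hcomp f
      rw [this]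
      show φ (Ideal.Quotient.mk I f) = 0
      rw [Ideal.Quotient.eq_zero_iff_mem.mpr hf, map_zero]
    · show MvPolynomial.aeval _ t = x
      rw [DFunLike.congr_fun hcomp t]
      exact hφ
  · rintro ⟨p, hp, rfl⟩
    set a := Ideal.Quotient.mk I t with ha
    set χ := LinearMap.charpoly (LinearMap.mulLeft k a) with hχ
    have hCH := LinearMap.aeval_self_charpoly (LinearMap.mulLeft k a)
    have hl : Algebra.lmul k (MvPolynomial (Fin n) k ⧸ I) a = LinearMap.mulLeft k a :=
      LinearMap.ext fun y => rfl
    have h1 : Polynomial.aeval a χ = 0 := by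
      have h := Polynomial.aeval_algHom_apply (Algebra.lmul k (MvPolynomial (Fin n) k ⧸ I)) a χ
      rw [hl, hCH] at h
      have h2 : Algebra.lmul k (MvPolynomial (Fin n) k ⧸ I) (Polynomial.aeval a χ)
          = Algebra.lmul k (MvPolynomial (Fin n) k ⧸ I) 0 := by
        rw [map_zero]; exact h.symm
      exact Algebra.lmul_injective h2
    have h2 : Polynomial.aeval t χ ∈ I := by
      rw [← Ideal.Quotient.eq_zero_iff_mem]
      have h := Polynomial.aeval_algHom_apply (Ideal.Quotient.mkₐ k I) t χ
      rw [Ideal.Quotient.mkₐ_eq_mk] at h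
      rw [← h, ← ha]
      exact h1
    have h3 := hp _ h2
    rwa [← Polynomial.aeval_algHom_apply (MvPolynomial.aeval p) t χ] at h3
end

section
/- Let k be a field of characteristic 0 with algebraic closure L, and let I ⊆ k[x_1,…,x_n] be a zero-dimensional ideal. Then the number of points of V_L(I) equals the rank of the symmetric bilinear form Q_1 on k[x_1,…,x_n]/I defined by Q_1(f̄, ḡ) = Tr(m_{fg}), where m_{fg} is the multiplication map by fg. -/
/-!
Points of `V_L(I)` are the `k`-algebra maps `k[X]/I → L`. For a finite-dimensional algebra `A`
over a perfect field each such map factors through a unique residue field `A/m`, so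
`#Hom(A, L) = Σ_m [A/m : k]`, and since `A/nil(A) ≅ Π_m A/m` this is `dim A - dim nil(A)`.
In characteristic 0 the kernel of the trace form is exactly `nil(A)`: nilpotents have trace zero,
while a non-nilpotent `x` has a nonzero idempotent multiple `e = xy`, whose trace is the
(nonzero) rank of multiplication by `e`. Rank–nullity for the trace form finishes the count.
-/

open Module LinearMap

theorem IsArtinianRing.exists_isIdempotentElem_mul_ne_zero {R : Type*} [CommRing R]
    [IsArtinianRing R] {x : R} (hx : ¬IsNilpotent x) :
    ∃ y, IsIdempotentElem (x * y) ∧ x * y ≠ 0 := by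
  obtain ⟨n, y, hy⟩ := IsArtinian.exists_pow_succ_smul_dvd x (1 : R)
  simp only [smul_eq_mul, mul_one] at hy
  -- `x ^ n * (x * y) = x ^ n`, so `e = (x * y) ^ (n + 1)` is idempotent and fixes `x ^ n ≠ 0`.
  have hstable : ∀ m, x ^ n * (x * y) ^ m = x ^ n := by
    intro m
    induction m with
    | zero => simp
    | succ m ih => rw [pow_succ, ← mul_assoc, ih, ← mul_assoc, ← pow_succ, hy]
  have hxy : x * (x ^ n * y ^ (n + 1)) = (x * y) ^ (n + 1) := by ring
  refine ⟨x ^ n * y ^ (n + 1), ?_, ?_⟩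
  · rw [hxy, IsIdempotentElem]
    calc (x * y) ^ (n + 1) * (x * y) ^ (n + 1)
        = y ^ (n + 1) * (x * (x ^ n * (x * y) ^ (n + 1))) := by ring
      _ = (x * y) ^ (n + 1) := by rw [hstable]; ring
  · rw [hxy]
    intro h
    exact hx ⟨n, by rw [← hstable (n + 1), h, mul_zero]⟩

section TraceForm

variable {k A : Type*} [Field k] [CharZero k] [CommRing A] [Algebra k A] [FiniteDimensional k A]

theorem Algebra.trace_ne_zero_of_isIdempotentElem {e : A} (he : IsIdempotentElem e)
    (hne : e ≠ 0) : Algebra.trace k A e ≠ 0 := by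
  rw [Algebra.trace_apply, Ne, (he.map (Algebra.lmul k A)).trace_eq_zero_iff]
  exact fun h => hne (Algebra.lmul_injective (h.trans (map_zero _).symm))

theorem Algebra.isNilpotent_iff_forall_trace_mul_eq_zero {x : A} :
    IsNilpotent x ↔ ∀ y, Algebra.trace k A (x * y) = 0 := by
  refine ⟨fun hx y => ?_, fun h => ?_⟩
  · exact (Algebra.isNilpotent_trace_of_isNilpotent
      ((Commute.all x y).isNilpotent_mul_right hx)).eq_zero
  · by_contra hx
    have : IsArtinianRing A := .of_finite k A
    obtain ⟨y, he, hne⟩ := IsArtinianRing.exists_isIdempotentElem_mul_ne_zero hx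
    exact Algebra.trace_ne_zero_of_isIdempotentElem he hne (h y)

theorem Algebra.ker_traceForm_eq_nilradical :
    ker (Algebra.traceForm k A) = (nilradical A).restrictScalars k := by
  ext x
  simp [Algebra.isNilpotent_iff_forall_trace_mul_eq_zero (k := k), LinearMap.ext_iff,
    mem_nilradical]

end TraceForm

section MaximalSpectrum

variable {R A B : Type*} [CommRing R] [CommRing A] [IsArtinianRing A] [Algebra R A]
  [CommRing B] [IsDomain B] [Algebra R B]

def AlgHom.kerMaximalSpectrum (φ : A →ₐ[R] B) : MaximalSpectrum A :=
  ⟨RingHom.ker φ, have := RingHom.ker_isPrime φ; inferInstance⟩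

def AlgHom.kerMaximalSpectrumFiberEquiv (m : MaximalSpectrum A) :
    {φ : A →ₐ[R] B // φ.kerMaximalSpectrum = m} ≃ (A ⧸ m.asIdeal →ₐ[R] B) where
  toFun φ := Ideal.Quotient.liftₐ m.asIdeal φ.1 fun a ha => by
    rwa [← φ.2] at ha
  invFun ψ := ⟨ψ.comp (Ideal.Quotient.mkₐ R m.asIdeal), by
    refine MaximalSpectrum.ext (m.isMaximal.eq_of_le (RingHom.ker_ne_top _) fun a ha => ?_).symm
    simp [(Ideal.Quotient.eq_zero_iff_mem).2 ha]⟩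
  left_inv φ := rfl
  right_inv ψ := Ideal.Quotient.algHom_ext R rfl

def AlgHom.equivSigmaMaximalSpectrum :
    (A →ₐ[R] B) ≃ Σ m : MaximalSpectrum A, (A ⧸ m.asIdeal →ₐ[R] B) :=
  (Equiv.sigmaFiberEquiv AlgHom.kerMaximalSpectrum).symm.trans
    (Equiv.sigmaCongrRight AlgHom.kerMaximalSpectrumFiberEquiv)

end MaximalSpectrum

section AlgHomCount

variable (k A L : Type*) [Field k] [CommRing A] [Algebra k A] [FiniteDimensional k A]
  [Field L] [Algebra k L]

theorem finrank_eq_sum_finrank_quotient_maximal_add_finrank_nilradical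
    [Fintype (MaximalSpectrum A)] :
    ∑ m : MaximalSpectrum A, finrank k (A ⧸ m.asIdeal)
      + finrank k ((nilradical A).restrictScalars k) = finrank k A := by
  have : IsArtinianRing A := .of_finite k A
  let e : (A ⧸ nilradical A) ≃ₗ[k] ∀ m : MaximalSpectrum A, A ⧸ m.asIdeal :=
    ((IsArtinianRing.quotNilradicalEquivPi A).restrictScalars k).toLinearEquiv
  rw [← finrank_pi_fintype, ← e.finrank_eq,
    ← (Submodule.Quotient.restrictScalarsEquiv k (nilradical A)).finrank_eq]
  exact Submodule.finrank_quotient_add_finrank _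

theorem card_algHom_eq_sum_finrank_quotient_maximal [PerfectField k] [IsAlgClosed L]
    [Fintype (MaximalSpectrum A)] :
    Nat.card (A →ₐ[k] L) = ∑ m : MaximalSpectrum A, finrank k (A ⧸ m.asIdeal) := by
  have : IsArtinianRing A := .of_finite k A
  rw [Nat.card_congr AlgHom.equivSigmaMaximalSpectrum, Nat.card_sigma]
  refine Finset.sum_congr rfl fun m _ => ?_
  let := Ideal.Quotient.field m.asIdeal
  rw [Nat.card_eq_fintype_card, AlgHom.card]

theorem card_algHom_add_finrank_nilradical [PerfectField k] [IsAlgClosed L] :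
    Nat.card (A →ₐ[k] L) + finrank k ((nilradical A).restrictScalars k) = finrank k A := by
  have : IsArtinianRing A := .of_finite k A
  have := Fintype.ofFinite (MaximalSpectrum A)
  rw [card_algHom_eq_sum_finrank_quotient_maximal k A L,
    finrank_eq_sum_finrank_quotient_maximal_add_finrank_nilradical]

theorem finrank_range_traceForm [CharZero k] [IsAlgClosed L] :
    finrank k (range (Algebra.traceForm k A)) = Nat.card (A →ₐ[k] L) := by
  have hrank := finrank_range_add_finrank_ker (Algebra.traceForm k A)
  rw [Algebra.ker_traceForm_eq_nilradical] at hrank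
  have hcount := card_algHom_add_finrank_nilradical k A L
  omega

end AlgHomCount

noncomputable def MvPolynomial.zeroLocusEquivAlgHom {σ k L : Type*} [CommRing k] [CommRing L]
    [Algebra k L] (I : Ideal (MvPolynomial σ k)) :
    {p : σ → L | ∀ f ∈ I, aeval p f = 0} ≃ (MvPolynomial σ k ⧸ I →ₐ[k] L) where
  toFun p := Ideal.Quotient.liftₐ I (aeval p.1) p.2
  invFun φ := ⟨fun i => φ (Ideal.Quotient.mk I (X i)), fun f hf => by
    have hφ : aeval (fun i => φ (Ideal.Quotient.mk I (X i))) =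
        φ.comp (Ideal.Quotient.mkₐ k I) := algHom_ext fun i => by simp
    simp [hφ, Ideal.Quotient.eq_zero_iff_mem.2 hf]⟩
  left_inv p := by
    ext i
    exact aeval_X p.1 i
  right_inv φ := Ideal.Quotient.algHom_ext k (algHom_ext fun i => aeval_X _ i)

/-- the number of points of `V_L(I)` equals the rank of the symmetric bilinear
form `Q_1` on `k[X]/I` defined by `Q_1(f̄, ḡ) = Tr(m_{fg})`. -/
theorem stmt_2 (k L : Type) [Field k] [CharZero k] [Field L] [Algebra k L]
    [IsAlgClosure k L] (n : ℕ) (I : Ideal (MvPolynomial (Fin n) k))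
    [FiniteDimensional k (MvPolynomial (Fin n) k ⧸ I)]
    (B : (MvPolynomial (Fin n) k ⧸ I) →ₗ[k] (MvPolynomial (Fin n) k ⧸ I) →ₗ[k] k)
    (hB : ∀ f g : MvPolynomial (Fin n) k,
      B (Ideal.Quotient.mk I f) (Ideal.Quotient.mk I g)
        = LinearMap.trace k (MvPolynomial (Fin n) k ⧸ I)
            (LinearMap.mulLeft k (Ideal.Quotient.mk I (f * g)))) :
    Nat.card {p : Fin n → L | ∀ f ∈ I, MvPolynomial.aeval p f = 0}
      = Module.finrank k (LinearMap.range B) := by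
  have := IsAlgClosure.isAlgClosed k (K := L)
  have hB_eq : B = Algebra.traceForm k _ := by
    refine LinearMap.ext₂ fun x y => ?_
    obtain ⟨f, rfl⟩ := Ideal.Quotient.mk_surjective x
    obtain ⟨g, rfl⟩ := Ideal.Quotient.mk_surjective y
    rw [hB, Algebra.traceForm_apply, Algebra.trace_apply, map_mul]
    rfl
  rw [Nat.card_congr (MvPolynomial.zeroLocusEquivAlgHom I), hB_eq, finrank_range_traceForm k _ L]
end

section
/- Let k be a field of characteristic 0 with algebraic closure L, and let I ⊆ k[x_1,…,x_n] be a zero-dimensional ideal. For t ∈ k[x_1,…,x_n], let χ_t ∈ k[T] be the characteristic polynomial of the multiplication map m_t and let χ̄_t = χ_t / gcd(χ_t, χ_t′) be its squarefree part. Then t separates V_L(I) if and only if deg(χ̄_t) equals the number of points of V_L(I). -/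
/-!
The roots of `χ_t` in `L` are exactly the values `t(p)`, `p ∈ V_L(I)`. A point `p` is a
`k`-algebra map `k[X]/I → L`, which kills `χ_t(t̄)` by Cayley–Hamilton. Conversely a root `μ`
is an eigenvalue of multiplication by `1 ⊗ t̄` on `L ⊗_k k[X]/I`, so `μ - 1 ⊗ t̄` lies in a
maximal ideal, whose residue field is `L`; this gives a point `p` with `t(p) = μ`. In
characteristic zero `χ_t / gcd(χ_t, χ_t′)` has the roots of `χ_t`, each with multiplicity one,
so its degree is the number of values of `t` on the finite set `V_L(I)`, and that number is
`#V_L(I)` iff `t` is injective there.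
-/

open Polynomial

namespace Polynomial

variable {K : Type*} [Field K] [DecidableEq K[X]]

theorem rootMultiplicity_gcd_derivative [CharZero K] {f : K[X]} (hf : f ≠ 0) (r : K) :
    rootMultiplicity r (EuclideanDomain.gcd f (derivative f)) = rootMultiplicity r f - 1 := by
  by_cases hf' : derivative f = 0
  · rw [eq_C_of_derivative_eq_zero hf']
    simp
  have hg : EuclideanDomain.gcd f (derivative f) ≠ 0 :=
    fun h => hf (EuclideanDomain.gcd_eq_zero_iff.mp h).1
  apply le_antisymm
  · by_cases hr : f.IsRoot r
    · rw [← derivative_rootMultiplicity_of_root hr]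
      exact rootMultiplicity_le_rootMultiplicity_of_dvd hf' (EuclideanDomain.gcd_dvd_right _ _) r
    · calc _ ≤ rootMultiplicity r f :=
            rootMultiplicity_le_rootMultiplicity_of_dvd hf (EuclideanDomain.gcd_dvd_left _ _) r
        _ = rootMultiplicity r f - 1 := by rw [rootMultiplicity_eq_zero hr]
  · refine (le_rootMultiplicity_iff hg).mpr (EuclideanDomain.dvd_gcd ?_ ?_)
    · exact (pow_dvd_pow _ (Nat.sub_le _ 1)).trans (pow_rootMultiplicity_dvd f r)
    · exact (le_rootMultiplicity_iff hf').mp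
        (rootMultiplicity_sub_one_le_derivative_rootMultiplicity f r)

theorem roots_div_gcd_derivative [CharZero K] [DecidableEq K] {f : K[X]} (hf : f ≠ 0) :
    (f / EuclideanDomain.gcd f (derivative f)).roots = f.roots.dedup := by
  have hg : EuclideanDomain.gcd f (derivative f) ≠ 0 :=
    fun h => hf (EuclideanDomain.gcd_eq_zero_iff.mp h).1
  have hfac := EuclideanDomain.mul_div_cancel' hg (EuclideanDomain.gcd_dvd_left f (derivative f))
  ext r
  have hcount := congrArg (fun p => p.roots.count r) hfac
  simp only [roots_mul (hfac.symm ▸ hf), Multiset.count_add, count_roots,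
    rootMultiplicity_gcd_derivative hf] at hcount
  rw [Multiset.count_dedup, count_roots]
  by_cases hr : r ∈ f.roots
  · have := (rootMultiplicity_pos hf).mpr (isRoot_of_mem_roots hr)
    rw [if_pos hr]
    omega
  · rw [if_neg hr]
    rw [← count_roots, Multiset.count_eq_zero.mpr hr] at hcount
    omega

theorem natDegree_div_gcd_derivative [CharZero K] [IsAlgClosed K] [DecidableEq K] {f : K[X]}
    (hf : f ≠ 0) :
    (f / EuclideanDomain.gcd f (derivative f)).natDegree = f.roots.toFinset.card := by
  rw [(IsAlgClosed.splits _).natDegree_eq_card_roots, roots_div_gcd_derivative hf,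
    Multiset.card_toFinset]

theorem natDegree_div_gcd_derivative_eq_ncard_rootSet {k L : Type*} [Field k] [CharZero k]
    [DecidableEq k[X]] [Field L] [Algebra k L] [IsAlgClosed L] {f : k[X]} (hf : f ≠ 0) :
    (f / EuclideanDomain.gcd f (derivative f)).natDegree = (f.rootSet L).ncard := by
  classical
  have : CharZero L := charZero_of_injective_algebraMap (algebraMap k L).injective
  have hmap : (f / EuclideanDomain.gcd f (derivative f)).map (algebraMap k L) =
      f.map (algebraMap k L) /
        EuclideanDomain.gcd (f.map (algebraMap k L)) (derivative (f.map (algebraMap k L))) := by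
    rw [map_div, derivative_map, gcd_map]
    convert rfl
  rw [← natDegree_map (algebraMap k L), hmap, natDegree_div_gcd_derivative (map_ne_zero hf),
    rootSet_def, Set.ncard_coe_finset, aroots_def]

end Polynomial

theorem Algebra.lmul_eq_mulLeft {R A : Type*} [CommSemiring R] [Semiring A] [Algebra R A]
    (a : A) :
    Algebra.lmul R A a = LinearMap.mulLeft R a :=
  rfl

theorem aeval_algHom_apply_charpoly_mulLeft {k A L : Type*} [Field k] [Ring A]
    [Algebra k A] [FiniteDimensional k A] [CommRing L] [Algebra k L] (φ : A →ₐ[k] L) (a : A) :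
    aeval (φ a) (LinearMap.mulLeft k a).charpoly = 0 := by
  rw [aeval_algHom_apply, ← Algebra.lmul_eq_mulLeft, Algebra.aeval_self_charpoly_lmul, map_zero]

theorem mem_spectrum_iff_isRoot_charpoly_mulLeft {K B : Type*} [Field K] [Ring B] [Algebra K B]
    [FiniteDimensional K B] (b : B) (μ : K) :
    μ ∈ spectrum K b ↔ (LinearMap.mulLeft K b).charpoly.IsRoot μ := by
  rw [← Algebra.lmul_eq_mulLeft, ← Module.End.mem_spectrum_iff_isRoot_charpoly,
    spectrum.mem_iff, spectrum.mem_iff, ← Algebra.lmul_isUnit_iff (R := K), map_sub,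
    AlgHom.commutes]

theorem exists_algHom_apply_eq_zero_of_not_isUnit {K B : Type*} [Field K] [IsAlgClosed K]
    [CommRing B] [Algebra K B] [FiniteDimensional K B] {b : B} (hb : ¬IsUnit b) :
    ∃ φ : B →ₐ[K] K, φ b = 0 := by
  obtain ⟨m, hm, hbm⟩ := exists_max_ideal_of_mem_nonunits hb
  let := Ideal.Quotient.field m
  have : Module.Finite K (B ⧸ m) :=
    Module.Finite.of_surjective (Ideal.Quotient.mkₐ K m).toLinearMap Ideal.Quotient.mk_surjective
  let e : K ≃ₐ[K] B ⧸ m := AlgEquiv.ofBijective (Algebra.ofId K _)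
    IsAlgClosed.algebraMap_bijective_of_isIntegral
  exact ⟨e.symm.toAlgHom.comp (Ideal.Quotient.mkₐ K m), by
    simp [Ideal.Quotient.eq_zero_iff_mem.mpr hbm]⟩

theorem exists_algHom_apply_eq_of_aeval_charpoly_mulLeft {k A L : Type*} [Field k] [CommRing A]
    [Algebra k A] [FiniteDimensional k A] [Field L] [IsAlgClosed L] [Algebra k L] {a : A} {μ : L}
    (hμ : aeval μ (LinearMap.mulLeft k a).charpoly = 0) : ∃ φ : A →ₐ[k] L, φ a = μ := by
  have hroot : (LinearMap.mulLeft L ((1 : L) ⊗ₜ[k] a)).charpoly.IsRoot μ := by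
    rw [← Algebra.lmul_eq_mulLeft, ← Algebra.baseChange_lmul, LinearMap.charpoly_baseChange,
      IsRoot, eval_map_algebraMap]
    exact hμ
  obtain ⟨ψ, hψ⟩ := exists_algHom_apply_eq_zero_of_not_isUnit (K := L)
    ((mem_spectrum_iff_isRoot_charpoly_mulLeft (K := L) _ μ).mpr hroot)
  refine ⟨(ψ.restrictScalars k).comp Algebra.TensorProduct.includeRight, ?_⟩
  rw [map_sub, AlgHom.commutes, sub_eq_zero] at hψ
  simpa using hψ.symm

namespace MvPolynomial

variable {σ k L : Type*} [Field k] [Field L] [Algebra k L] (I : Ideal (MvPolynomial σ k))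

theorem image_aeval_zeroLocus (t : MvPolynomial σ k) :
    (fun p => aeval p t) '' zeroLocus L I =
      Set.range fun φ : MvPolynomial σ k ⧸ I →ₐ[k] L => φ (Ideal.Quotient.mk I t) := by
  ext μ
  constructor
  · rintro ⟨p, hp, rfl⟩
    exact ⟨Ideal.Quotient.liftₐ I (aeval p) hp, rfl⟩
  · rintro ⟨φ, rfl⟩
    have hφ : φ.comp (Ideal.Quotient.mkₐ k I) = aeval fun i => φ (Ideal.Quotient.mk I (X i)) :=
      aeval_unique _
    refine ⟨fun i => φ (Ideal.Quotient.mk I (X i)), fun f hf => ?_, ?_⟩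
    · rw [← DFunLike.congr_fun hφ f, AlgHom.comp_apply, Ideal.Quotient.mkₐ_eq_mk,
        Ideal.Quotient.eq_zero_iff_mem.mpr hf, map_zero]
    · exact (DFunLike.congr_fun hφ t).symm

variable [FiniteDimensional k (MvPolynomial σ k ⧸ I)]

theorem finite_zeroLocus [Finite σ] : (zeroLocus L I).Finite := by
  refine (Set.Finite.pi fun i =>
    rootSet_finite (LinearMap.mulLeft k (Ideal.Quotient.mk I (X i))).charpoly L).subset ?_
  intro p hp i _
  rw [mem_rootSet_of_ne (LinearMap.charpoly_monic _).ne_zero]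
  obtain ⟨φ, hφ⟩ : aeval p (X i) ∈ Set.range fun φ : MvPolynomial σ k ⧸ I →ₐ[k] L =>
      φ (Ideal.Quotient.mk I (X i)) := by
    rw [← image_aeval_zeroLocus]
    exact ⟨p, hp, rfl⟩
  rw [← aeval_X (R := k) p i, ← hφ]
  exact aeval_algHom_apply_charpoly_mulLeft φ _

theorem image_aeval_zeroLocus_eq_rootSet [IsAlgClosed L] (t : MvPolynomial σ k) :
    (fun p => aeval p t) '' zeroLocus L I =
      (LinearMap.mulLeft k (Ideal.Quotient.mk I t)).charpoly.rootSet L := by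
  ext μ
  rw [image_aeval_zeroLocus, Set.mem_range,
    mem_rootSet_of_ne (LinearMap.charpoly_monic _).ne_zero]
  exact ⟨fun ⟨φ, hφ⟩ => hφ ▸ aeval_algHom_apply_charpoly_mulLeft φ _,
    exists_algHom_apply_eq_of_aeval_charpoly_mulLeft⟩

end MvPolynomial

/-- `t` separates `V_L(I)` iff the degree of the squarefree part
`χ̄_t = χ_t / gcd(χ_t, χ_t′)` of the characteristic polynomial of `m_t` equals the number
of points of `V_L(I)`. -/
theorem stmt_4 (k L : Type) [Field k] [CharZero k] [Field L] [Algebra k L]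
    [IsAlgClosure k L] [DecidableEq (Polynomial k)] (n : ℕ) (I : Ideal (MvPolynomial (Fin n) k))
    [FiniteDimensional k (MvPolynomial (Fin n) k ⧸ I)]
    (t : MvPolynomial (Fin n) k)
    (χ : Polynomial k)
    (hχ : χ = LinearMap.charpoly (LinearMap.mulLeft k ((Ideal.Quotient.mk I) t))) :
    Set.InjOn (fun p : Fin n → L => MvPolynomial.aeval p t)
        {p : Fin n → L | ∀ f ∈ I, MvPolynomial.aeval p f = 0}
      ↔ (χ / EuclideanDomain.gcd χ (Polynomial.derivative χ)).natDegree
          = Nat.card {p : Fin n → L | ∀ f ∈ I, MvPolynomial.aeval p f = 0} := by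
  have : IsAlgClosed L := IsAlgClosure.isAlgClosed k
  change Set.InjOn _ (MvPolynomial.zeroLocus L I) ↔ _ = Nat.card (MvPolynomial.zeroLocus L I)
  have hχ0 : χ ≠ 0 := hχ ▸ (LinearMap.charpoly_monic _).ne_zero
  rw [Nat.card_coe_set_eq, natDegree_div_gcd_derivative_eq_ncard_rootSet (L := L) hχ0, hχ,
    ← MvPolynomial.image_aeval_zeroLocus_eq_rootSet (L := L),
    Set.ncard_image_iff (MvPolynomial.finite_zeroLocus I)]
end

section
/- Let k be a field of characteristic 0 with algebraic closure L, let I ⊆ k[x_1,…,x_n] be a zero-dimensional ideal, and let d be the number of points of V_L(I). If d ≥ 2, then there exists an integer i with 1 ≤ i ≤ n·d·(d−1)/2 such that the polynomial t = x_1 + i·x_2 + i²·x_3 + ⋯ + i^{n−1}·x_n separates V_L(I). -/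
/-!
For points `p ≠ q` we have `t_i(p) - t_i(q) = ∑ⱼ (pⱼ - qⱼ) iʲ`; if this vanished for `n` distinct
integers `i`, the invertible Vandermonde matrix would force `p = q`. So at most `n - 1` integers
fail to separate a given pair, and over the `d(d-1)/2` pairs at most `(n - 1)·d(d-1)/2 < n·d(d-1)/2`
candidates are ruled out.
-/

open Finset

open Classical in
theorem card_filter_not_injOn_le {ι α β : Type*} (T : Finset ι) (f : ι → α → β) (m : ℕ)
    (S : Finset α) (h : ∀ p ∈ S, ∀ q ∈ S, p ≠ q → #{i ∈ T | f i p = f i q} ≤ m) :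
    #{i ∈ T | ¬ Set.InjOn (f i) S} ≤ (#S).choose 2 * m := by
  induction S using Finset.induction_on with
  | empty => simp
  | @insert a S ha ih =>
    have hsub : {i ∈ T | ¬ Set.InjOn (f i) ↑(insert a S)} ⊆
        {i ∈ T | ¬ Set.InjOn (f i) S} ∪ S.biUnion fun q => {i ∈ T | f i a = f i q} := by
      intro i
      simp only [mem_filter, coe_insert, Set.injOn_insert (mem_coe.not.mpr ha), mem_union,
        mem_biUnion, Set.mem_image, mem_coe]
      tauto
    calc _ ≤ _ := card_le_card hsub
      _ ≤ (#S).choose 2 * m + #S * m := by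
        refine (card_union_le _ _).trans (add_le_add ?_ ?_)
        · exact ih fun p hp q hq => h p (mem_insert_of_mem hp) q (mem_insert_of_mem hq)
        · refine card_biUnion_le_card_mul _ _ _ fun q hq => ?_
          exact h a (mem_insert_self a S) q (mem_insert_of_mem hq) (ne_of_mem_of_not_mem hq ha).symm
      _ = (#(insert a S)).choose 2 * m := by
        rw [card_insert_of_notMem ha, Nat.choose_succ_succ', Nat.choose_one_right]; ring

section

variable {K : Type*} [CommRing K] [IsDomain K] [CharZero K] {n : ℕ}

open Classical in
theorem card_filter_sum_natCast_pow_mul_eq_lt (T : Finset ℕ) {p q : Fin n → K} (hpq : p ≠ q) :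
    #{i ∈ T | ∑ j : Fin n, ((i : ℕ) : K) ^ (j : ℕ) * p j =
      ∑ j : Fin n, ((i : ℕ) : K) ^ (j : ℕ) * q j} < n := by
  by_contra! hcard
  set C := {i ∈ T | ∑ j : Fin n, ((i : ℕ) : K) ^ (j : ℕ) * p j =
    ∑ j : Fin n, ((i : ℕ) : K) ^ (j : ℕ) * q j}
  let x : Fin n ↪ C := (Fin.castLEEmb hcard).trans C.equivFin.symm.toEmbedding
  refine hpq (sub_eq_zero.mp (Matrix.eq_zero_of_forall_index_sum_pow_mul_eq_zero
    (f := fun j => ((x j : ℕ) : K))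
    (Nat.cast_injective.comp (Subtype.val_injective.comp x.injective)) fun j => ?_))
  have := (mem_filter.mp (x j).2).2
  simp only [Pi.sub_apply, mul_sub, sum_sub_distrib, this, sub_self]

theorem exists_injOn_sum_natCast_pow_mul (S : Finset (Fin n → K)) (hS : 2 ≤ #S) :
    ∃ i, 1 ≤ i ∧ i ≤ n * (#S).choose 2 ∧
      Set.InjOn (fun p : Fin n → K => ∑ j : Fin n, (i : K) ^ (j : ℕ) * p j) S := by
  classical
  have hn : n ≠ 0 := by
    rintro rfl
    have : #S ≤ 1 := card_le_one.mpr fun p _ q _ => Subsingleton.elim p q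
    omega
  have hbad := card_filter_not_injOn_le (Icc 1 (n * (#S).choose 2))
    (fun (i : ℕ) (p : Fin n → K) => ∑ j : Fin n, (i : K) ^ (j : ℕ) * p j) (n - 1) S
    fun p _ q _ hpq => Nat.le_sub_one_of_lt (card_filter_sum_natCast_pow_mul_eq_lt _ hpq)
  have hlt : (#S).choose 2 * (n - 1) < #(Icc 1 (n * (#S).choose 2)) := by
    have : 0 < (#S).choose 2 := Nat.choose_pos hS
    rw [Nat.card_Icc, add_tsub_cancel_right, mul_comm n]
    exact Nat.mul_lt_mul_of_pos_left (by omega) this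
  obtain ⟨i, hi, hinj⟩ := exists_mem_notMem_of_card_lt_card (hbad.trans_lt hlt)
  rw [mem_filter, not_and, not_not] at hinj
  exact ⟨i, (mem_Icc.mp hi).1, (mem_Icc.mp hi).2, hinj hi⟩

end

theorem stmt_5_general (k L : Type) [Field k] [CharZero k] [Field L] [Algebra k L]
    (n : ℕ) (I : Ideal (MvPolynomial (Fin n) k))
    (d : ℕ) (hd : d = Nat.card {p : Fin n → L | ∀ f ∈ I, MvPolynomial.aeval p f = 0})
    (h2 : 2 ≤ d) :
    ∃ i : ℕ, 1 ≤ i ∧ i ≤ n * d * (d - 1) / 2 ∧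
      Set.InjOn
        (fun p : Fin n → L =>
          MvPolynomial.aeval p
            (∑ j : Fin n, MvPolynomial.C ((i : k) ^ (j : ℕ)) * MvPolynomial.X j))
        {p : Fin n → L | ∀ f ∈ I, MvPolynomial.aeval p f = 0} := by
  have : CharZero L := charZero_of_injective_algebraMap (algebraMap k L).injective
  set V := {p : Fin n → L | ∀ f ∈ I, MvPolynomial.aeval p f = 0}
  -- `Nat.card` of an infinite type is `0`, so `2 ≤ d` already makes `V` finite.
  have hV : V.Finite := Nat.finite_of_card_ne_zero (by omega)
  rw [Nat.card_eq_card_finite_toFinset hV] at hd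
  subst hd
  obtain ⟨i, hi1, hiN, hinj⟩ := exists_injOn_sum_natCast_pow_mul hV.toFinset h2
  refine ⟨i, hi1, ?_, ?_⟩
  · rwa [mul_assoc, Nat.mul_div_assoc _ (Nat.even_mul_pred_self _).two_dvd, ← Nat.choose_two_right]
  · simpa [map_sum] using hinj

/-- if the number `d` of points of `V_L(I)` satisfies `d ≥ 2`, then there is an
integer `i` with `1 ≤ i ≤ n·d·(d−1)/2` such that `t = x_1 + i·x_2 + i²·x_3 + ⋯ + i^{n−1}·x_n`
separates `V_L(I)`. -/
theorem stmt_5 (k L : Type) [Field k] [CharZero k] [Field L] [Algebra k L]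
    [IsAlgClosure k L] (n : ℕ) (I : Ideal (MvPolynomial (Fin n) k))
    [FiniteDimensional k (MvPolynomial (Fin n) k ⧸ I)]
    (d : ℕ) (hd : d = Nat.card {p : Fin n → L | ∀ f ∈ I, MvPolynomial.aeval p f = 0})
    (h2 : 2 ≤ d) :
    ∃ i : ℕ, 1 ≤ i ∧ i ≤ n * d * (d - 1) / 2 ∧
      Set.InjOn
        (fun p : Fin n → L =>
          MvPolynomial.aeval p
            (∑ j : Fin n, MvPolynomial.C ((i : k) ^ (j : ℕ)) * MvPolynomial.X j))
        {p : Fin n → L | ∀ f ∈ I, MvPolynomial.aeval p f = 0} :=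
  stmt_5_general k L n I d hd h2
end

section
/- Let k be a field of characteristic 0 with algebraic closure L and parameters U = (u_1,…,u_m). Let 𝒳(U,T) = ∑_{i=0}^{l} c_i(U)·T^i ∈ k[U][T] with l ≥ 1, and let E, N be finite subsets of k[U] such that c_l(ū) ≠ 0 for all ū ∈ V_L(E)∖V_L(N). Then there exist finite subsets E_0,…,E_{l−1}, N_0,…,N_{l−1} of k[U] such that for each 0 ≤ i ≤ l−1 and every ū ∈ V_L(E)∖V_L(N): deg(gcd(𝒳(ū,T), 𝒳′(ū,T))) = i if and only if ū ∈ V_L(E_i)∖V_L(N_i), where 𝒳′ is the derivative of 𝒳 with respect to T and gcd is taken in L[T]. -/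
open Polynomial Matrix

variable {K : Type*} [Field K]

/-- All square "row-selection" minors of `A` vanish iff `A` has a nontrivial kernel. -/
theorem aux_dets_zero_iff {Nn : ℕ} {α : Type*} [Fintype α] [DecidableEq α]
    (A : Matrix (Fin Nn) α K) :
    (∀ r : α → Fin Nn, (A.submatrix r id).det = 0) ↔ ∃ v ≠ 0, A.mulVec v = 0 := by
  constructor
  · intro h
    by_contra hcon
    push_neg at hcon
    -- mulVec injective
    have hker : LinearMap.ker A.mulVecLin = ⊥ := by
      rw [Submodule.eq_bot_iff]
      intro v hv
      by_contra hv0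
      exact (hcon v hv0) hv
    have hinj : Function.Injective A.mulVecLin := LinearMap.ker_eq_bot.mp hker
    -- rank = card α
    have hrank : A.rank = Fintype.card α := by
      rw [Matrix.rank, LinearMap.finrank_range_of_inj hinj,
        Module.finrank_fintype_fun_eq_card]
    -- rows span everything
    have hspan : Submodule.span K (Set.range (fun i => A i)) = ⊤ := by
      apply Submodule.eq_top_of_finrank_eq
      rw [show (Set.range fun i => A i) = Set.range A.row from rfl, ← Matrix.rank_eq_finrank_span_row, hrank, Module.finrank_fintype_fun_eq_card]
    obtain ⟨b, hbsub, hbspan, hbind⟩ := exists_linearIndependent K (Set.range (fun i => A i))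
    rw [hspan] at hbspan
    haveI : Fintype b := ((Set.finite_range _).subset hbsub).fintype
    let bas : Module.Basis b K (α → K) := Module.Basis.mk hbind
      (by rw [Subtype.range_coe_subtype, Set.setOf_mem_eq, hbspan])
    have hcard : Fintype.card α = Fintype.card b := by
      rw [← Module.finrank_fintype_fun_eq_card K (η := α), Module.finrank_eq_card_basis bas]
    let e : α ≃ b := Fintype.equivOfCardEq hcard
    have hchoose : ∀ x : b, ∃ i : Fin Nn, A i = (x : α → K) := fun x => hbsub x.2
    choose idx hidx using hchoose
    refine absurd (h (fun a => idx (e a))) ?_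
    -- rows of this submatrix are linearly independent
    have hrows : LinearIndependent K (fun a : α => (A.submatrix (fun a => idx (e a)) id) a) := by
      have : (fun a : α => (A.submatrix (fun a => idx (e a)) id) a)
          = (fun x : b => (x : α → K)) ∘ e := by
        funext a
        show A (idx (e a)) = _
        exact hidx (e a)
      rw [this]
      exact hbind.comp e e.injective
    intro hdet
    obtain ⟨v, hv0, hv⟩ := Matrix.exists_vecMul_eq_zero_iff.mpr hdet
    rw [Fintype.linearIndependent_iff] at hrows
    refine hv0 (funext (hrows v ?_))
    ext j
    simpa [Matrix.vecMul, dotProduct] using congr_fun hv j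
  · rintro ⟨v, hv0, hv⟩ r
    rw [← Matrix.exists_mulVec_eq_zero_iff]
    refine ⟨v, hv0, ?_⟩
    funext i
    simpa [Matrix.mulVec, Matrix.submatrix, dotProduct] using congr_fun hv (r i)
/-- polynomial with coefficient vector `v`. -/
noncomputable def ofCoeffs {d : ℕ} (v : Fin d → K) : K[X] :=
  ∑ s : Fin d, Polynomial.C (v s) * Polynomial.X ^ (s : ℕ)

theorem ofCoeffs_coeff {d : ℕ} (v : Fin d → K) (t : ℕ) :
    (ofCoeffs v).coeff t = if h : t < d then v ⟨t, h⟩ else 0 := by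
  rw [ofCoeffs, Polynomial.finset_sum_coeff]
  simp only [Polynomial.coeff_C_mul, Polynomial.coeff_X_pow]
  split
  · next h =>
    rw [Finset.sum_eq_single (⟨t, h⟩ : Fin d)]
    · simp
    · intro b _ hb
      simp only [mul_ite, mul_one, mul_zero, ite_eq_right_iff]
      intro he
      exact absurd (Fin.ext he.symm) hb
    · simp
  · next h =>
    apply Finset.sum_eq_zero
    intro b _
    simp only [mul_ite, mul_one, mul_zero, ite_eq_right_iff]
    intro he
    exact absurd (he ▸ b.isLt) h

theorem ofCoeffs_eq_zero_iff {d : ℕ} (v : Fin d → K) : ofCoeffs v = 0 ↔ v = 0 := by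
  constructor
  · intro h
    funext s
    have := congr_arg (fun p => Polynomial.coeff p (s : ℕ)) h
    simpa [ofCoeffs_coeff, s.isLt] using this
  · intro h; simp [ofCoeffs, h]

theorem ofCoeffs_coeff_hi {d : ℕ} (v : Fin d → K) {t : ℕ} (h : d ≤ t) :
    (ofCoeffs v).coeff t = 0 := by
  rw [ofCoeffs_coeff]
  rw [dif_neg (by omega)]

theorem ofCoeffs_natDegree_lt {d : ℕ} (v : Fin d → K) (hd : 1 ≤ d) :
    (ofCoeffs v).natDegree < d := by
  have : (ofCoeffs v).natDegree ≤ d - 1 := by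
    rw [Polynomial.natDegree_le_iff_coeff_eq_zero]
    intro t ht
    exact ofCoeffs_coeff_hi v (by omega)
  omega

theorem ofCoeffs_of_coeffs {d : ℕ} (a : K[X]) (h : ∀ t, d ≤ t → a.coeff t = 0) :
    ofCoeffs (fun s : Fin d => a.coeff s) = a := by
  ext t
  rw [ofCoeffs_coeff]
  split
  · rfl
  · next hlt => exact (h t (by omega)).symm

theorem coeff_ofCoeffs_mul {d : ℕ} (v : Fin d → K) (p : K[X]) (t : ℕ) :
    (ofCoeffs v * p).coeff t
      = ∑ s : Fin d, (if (s : ℕ) ≤ t then v s * p.coeff (t - s) else 0) := by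
  classical
  rw [Polynomial.coeff_mul, Finset.Nat.sum_antidiagonal_eq_sum_range_succ_mk]
  -- common extended form
  have key : ∀ kk : ℕ, (if kk ≤ t then (ofCoeffs v).coeff kk * p.coeff (t - kk) else 0)
      = (if kk ≤ t ∧ kk < d then (ofCoeffs v).coeff kk * p.coeff (t - kk) else 0) := by
    intro kk
    by_cases h1 : kk ≤ t <;> by_cases h2 : kk < d <;> simp [h1, h2]
    exact Or.inl (ofCoeffs_coeff_hi v (by omega))
  calc ∑ kk ∈ Finset.range (t + 1), (ofCoeffs v).coeff kk * p.coeff (t - kk)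
      = ∑ kk ∈ Finset.range (t + 1),
          (if kk ≤ t ∧ kk < d then (ofCoeffs v).coeff kk * p.coeff (t - kk) else 0) := by
        apply Finset.sum_congr rfl
        intro kk hk
        rw [Finset.mem_range] at hk
        rw [← key kk, if_pos (by omega)]
    _ = ∑ kk ∈ Finset.range (t + 1 + d),
          (if kk ≤ t ∧ kk < d then (ofCoeffs v).coeff kk * p.coeff (t - kk) else 0) := by
        apply Finset.sum_subset (Finset.range_subset_range.mpr (by omega))
        intro kk _ hk
        rw [Finset.mem_range] at hk
        rw [if_neg (by omega)]
    _ = ∑ kk ∈ Finset.range d,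
          (if kk ≤ t ∧ kk < d then (ofCoeffs v).coeff kk * p.coeff (t - kk) else 0) := by
        symm
        apply Finset.sum_subset (Finset.range_subset_range.mpr (by omega))
        intro kk _ hk
        rw [Finset.mem_range] at hk
        rw [if_neg (by omega)]
    _ = ∑ s : Fin d, (if (s : ℕ) ≤ t then v s * p.coeff (t - s) else 0) := by
        rw [Finset.sum_range fun kk => _]
        apply Finset.sum_congr rfl
        intro s _
        simp only [s.isLt, and_true, ofCoeffs_coeff, s.isLt, dif_pos]

section
variable {R : Type*} [CommRing R]

/-- Sylvester-type matrix: columns are coefficient vectors of `X^s * p` and `X^s * q`. -/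
def sylv (p q : R[X]) (dp dq n : ℕ) : Matrix (Fin n) (Fin dp ⊕ Fin dq) R :=
  fun t s => Sum.elim
    (fun s : Fin dp => if (s : ℕ) ≤ (t : ℕ) then p.coeff (t - s) else 0)
    (fun s : Fin dq => if (s : ℕ) ≤ (t : ℕ) then q.coeff (t - s) else 0) s

theorem sylv_map {S : Type*} [CommRing S] (φ : R →+* S) (p q : R[X]) (dp dq n : ℕ) :
    (sylv p q dp dq n).map φ = sylv (p.map φ) (q.map φ) dp dq n := by
  ext t s
  cases s with
  | inl s => simp [sylv, Matrix.map_apply, apply_ite φ, Polynomial.coeff_map]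
  | inr s => simp [sylv, Matrix.map_apply, apply_ite φ, Polynomial.coeff_map]

end



theorem sylv_mulVec (p q : K[X]) (dp dq n : ℕ) (v : Fin dp ⊕ Fin dq → K) (t : Fin n) :
    (sylv p q dp dq n).mulVec v t
      = (ofCoeffs (v ∘ Sum.inl) * p + ofCoeffs (v ∘ Sum.inr) * q).coeff t := by
  rw [Polynomial.coeff_add, coeff_ofCoeffs_mul, coeff_ofCoeffs_mul]
  rw [Matrix.mulVec, dotProduct, Fintype.sum_sum_type]
  congr 1 <;>
  · apply Finset.sum_congr rfl
    intro s _
    simp only [sylv, Sum.elim_inl, Sum.elim_inr, ite_mul, zero_mul, Function.comp]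
    congr 1
    ring

theorem ofCoeffs_natDegree_le {d : ℕ} (v : Fin d → K) :
    (ofCoeffs v).natDegree ≤ d - 1 := by
  rw [Polynomial.natDegree_le_iff_coeff_eq_zero]
  intro t ht
  exact ofCoeffs_coeff_hi v (by omega)

variable [DecidableEq K[X]]

/-- degree of EuclideanDomain.gcd equals degree of GCDMonoid gcd -/
theorem eucl_gcd_natDegree [GCDMonoid K[X]] (f g : K[X]) :
    (EuclideanDomain.gcd f g).natDegree = (gcd f g).natDegree := by
  have h1 : Associated (EuclideanDomain.gcd f g) (gcd f g) := by
    apply associated_of_dvd_dvd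
    · exact dvd_gcd (EuclideanDomain.gcd_dvd_left f g) (EuclideanDomain.gcd_dvd_right f g)
    · exact EuclideanDomain.dvd_gcd (gcd_dvd_left f g) (gcd_dvd_right f g)
  exact natDegree_eq_of_degree_eq (degree_eq_degree_of_associated h1)

/-- Main equivalence: nontrivial kernel of Sylvester-type matrix ↔ gcd degree ≥ j. -/
theorem kernel_iff_gcd_deg (f g : K[X]) (l j : ℕ)
    (hf : f ≠ 0) (hg : g ≠ 0) (hfd : f.natDegree = l) (hgd : g.natDegree = l - 1)
    (hl : 1 ≤ l) (hj1 : 1 ≤ j) (hjl : j ≤ l) :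
    (∃ v : Fin (l - j) ⊕ Fin (l - j + 1) → K, v ≠ 0 ∧
        (sylv f g (l - j) (l - j + 1) (2 * l - j)).mulVec v = 0)
      ↔ j ≤ (EuclideanDomain.gcd f g).natDegree := by
  letI : NormalizedGCDMonoid K[X] := letI := Classical.decEq K; inferInstance
  rw [eucl_gcd_natDegree]
  constructor
  · rintro ⟨v, hv0, hv⟩
    set a := ofCoeffs (v ∘ Sum.inl) with ha
    set b := ofCoeffs (v ∘ Sum.inr) with hb
    have hrel : a * f + b * g = 0 := by
      ext t
      rcases lt_or_ge t (2 * l - j) with ht | ht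
      · have := congr_fun hv ⟨t, ht⟩
        rw [sylv_mulVec] at this
        simpa using this
      · rw [Polynomial.coeff_add, Polynomial.coeff_zero]
        have haf : (a * f).coeff t = 0 := by
          rcases eq_or_ne a 0 with h | h
          · simp [h]
          · apply Polynomial.coeff_eq_zero_of_natDegree_lt
            calc (a * f).natDegree ≤ a.natDegree + f.natDegree := natDegree_mul_le
              _ ≤ (l - j - 1) + l := by
                  have h2 := ofCoeffs_natDegree_le (v ∘ Sum.inl)
                  rw [← ha] at h2
                  omega
              _ < t := by
                  -- if l = j then a must be 0 (Fin 0), contradiction with h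
                  rcases eq_or_lt_of_le hjl with hq | hq
                  · exfalso
                    apply h
                    rw [ha, ofCoeffs_eq_zero_iff]
                    funext s
                    exact absurd s.2 (by omega)
                  · omega
        have hbg : (b * g).coeff t = 0 := by
          apply Polynomial.coeff_eq_zero_of_natDegree_lt
          calc (b * g).natDegree ≤ b.natDegree + g.natDegree := natDegree_mul_le
            _ ≤ (l - j) + (l - 1) := by
                have h2 := ofCoeffs_natDegree_le (v ∘ Sum.inr)
                rw [← hb] at h2
                omega
            _ < t := by omega
        rw [haf, hbg, add_zero]
    -- b ≠ 0
    have hab : a ≠ 0 ∨ b ≠ 0 := by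
      by_contra hcon
      push_neg at hcon
      apply hv0
      funext s
      cases s with
      | inl s =>
        have := (ofCoeffs_eq_zero_iff (v ∘ Sum.inl)).mp hcon.1
        exact congr_fun this s
      | inr s =>
        have := (ofCoeffs_eq_zero_iff (v ∘ Sum.inr)).mp hcon.2
        exact congr_fun this s
    have hbne : b ≠ 0 := by
      intro hb0
      rw [hb0, zero_mul, add_zero, mul_eq_zero] at hrel
      rcases hab with h | h
      · exact h (hrel.resolve_right hf)
      · exact h hb0
    have hane : a ≠ 0 := by
      intro ha0
      rw [ha0, zero_mul, zero_add, mul_eq_zero] at hrel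
      exact (hbne (hrel.resolve_right hg))
    -- lcm argument
    have hm : a * f ≠ 0 := mul_ne_zero hane hf
    have hfd' : f ∣ a * f := Dvd.intro_left a rfl
    have hgd' : g ∣ a * f := by
      have : a * f = (-b) * g := by linear_combination hrel
      rw [this]
      exact Dvd.intro_left (-b) rfl
    have hlcm : lcm f g ∣ a * f := lcm_dvd hfd' hgd'
    have hlcmdeg : (lcm f g).natDegree ≤ a.natDegree + f.natDegree :=
      (Polynomial.natDegree_le_of_dvd hlcm hm).trans_eq (Polynomial.natDegree_mul hane hf)
    have hadeg : a.natDegree ≤ l - j - 1 := by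
      have h2 := ofCoeffs_natDegree_le (v ∘ Sum.inl)
      rw [← ha] at h2
      exact h2
    have hassoc := gcd_mul_lcm f g
    have hdeg2 : (gcd f g).natDegree + (lcm f g).natDegree = f.natDegree + g.natDegree := by
      have h1 := natDegree_eq_of_degree_eq (degree_eq_degree_of_associated hassoc)
      have hgcd0 : gcd f g ≠ 0 := fun h => hf ((gcd_eq_zero_iff f g).mp h).1
      have hlcm0 : lcm f g ≠ 0 := fun h => ((lcm_eq_zero_iff f g).mp h).elim hf hg
      rw [← Polynomial.natDegree_mul hgcd0 hlcm0, h1, Polynomial.natDegree_mul hf hg]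
    -- j = l case: a : Fin 0 → nonzero impossible
    have hjlt : j < l ∨ (j = l ∧ False) := by
      rcases eq_or_lt_of_le hjl with hq | hq
      · exfalso
        apply hane
        rw [ha, ofCoeffs_eq_zero_iff]
        funext s
        exact absurd s.2 (by omega)
      · exact Or.inl hq
    rcases hjlt with hjlt | ⟨_, hfalse⟩
    · omega
    · exact hfalse.elim
  · intro hj
    set d := gcd f g with hd
    have hd0 : d ≠ 0 := fun h => hf ((gcd_eq_zero_iff f g).mp h).1
    obtain ⟨b', hb'⟩ : d ∣ f := gcd_dvd_left f g
    obtain ⟨a', ha'⟩ : d ∣ g := gcd_dvd_right f g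
    have ha'0 : a' ≠ 0 := fun h => hg (by rw [ha', h, mul_zero])
    have hb'0 : b' ≠ 0 := fun h => hf (by rw [hb', h, mul_zero])
    have hdega : d.natDegree + a'.natDegree = l - 1 := by
      rw [← Polynomial.natDegree_mul hd0 ha'0, ← ha', hgd]
    have hdegb : d.natDegree + b'.natDegree = l := by
      rw [← Polynomial.natDegree_mul hd0 hb'0, ← hb', hfd]
    have hdle : d.natDegree ≤ l - 1 := by omega
    have hadeg : a'.natDegree ≤ l - j - 1 := by omega
    have hbdeg : b'.natDegree ≤ l - j := by omega
    set v : Fin (l - j) ⊕ Fin (l - j + 1) → K :=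
      Sum.elim (fun s => a'.coeff s) (fun s => (-b').coeff s) with hvdef
    have hva : ofCoeffs (v ∘ Sum.inl) = a' := by
      apply ofCoeffs_of_coeffs
      intro t ht
      apply Polynomial.coeff_eq_zero_of_natDegree_lt
      omega
    have hvb : ofCoeffs (v ∘ Sum.inr) = -b' := by
      apply ofCoeffs_of_coeffs
      intro t ht
      have : b'.coeff t = 0 := Polynomial.coeff_eq_zero_of_natDegree_lt (by omega)
      exact (Polynomial.coeff_neg b' t).trans (by rw [this, neg_zero])
    refine ⟨v, ?_, ?_⟩
    · intro h0
      apply ha'0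
      rw [← hva, h0]
      have : (0 : Fin (l - j) ⊕ Fin (l - j + 1) → K) ∘ Sum.inl = 0 := rfl
      rw [this, (ofCoeffs_eq_zero_iff (0 : Fin (l - j) → K)).mpr rfl]
    · funext t
      rw [sylv_mulVec, hva, hvb]
      have : a' * f + -b' * g = 0 := by
        rw [hb', ha']
        ring
      rw [this]
      simp


/-- extended subresultant theorem, parametric degree-of-gcd partition:
for `𝒳(U,T) = ∑_{i=0}^l c_i(U) T^i ∈ k[U][T]` with `l ≥ 1` and `E, N` finite subsets of
`k[U]` such that `c_l(u) ≠ 0` on `V_L(E)∖V_L(N)`, there exist finite subsets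
`E_0,…,E_{l−1}, N_0,…,N_{l−1}` of `k[U]` such that for each `0 ≤ i ≤ l−1` and every
`u ∈ V_L(E)∖V_L(N)`, `deg(gcd(𝒳(u,T), 𝒳′(u,T))) = i ↔ u ∈ V_L(E_i)∖V_L(N_i)`. -/
theorem stmt_8 (k L : Type) [Field k] [CharZero k] [Field L] [Algebra k L]
    [IsAlgClosure k L] [DecidableEq (Polynomial L)]
    (m : ℕ) (𝒳 : Polynomial (MvPolynomial (Fin m) k)) (l : ℕ) (hl : 1 ≤ l)
    (hdeg : 𝒳.natDegree ≤ l)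
    (E N : Finset (MvPolynomial (Fin m) k))
    (hlc : ∀ u : Fin m → L,
      (∀ f ∈ E, MvPolynomial.aeval u f = 0) → (∃ f ∈ N, MvPolynomial.aeval u f ≠ 0) →
      MvPolynomial.aeval u (𝒳.coeff l) ≠ 0) :
    ∃ Efam Nfam : Fin l → Finset (MvPolynomial (Fin m) k),
      ∀ (i : Fin l) (u : Fin m → L),
        (∀ f ∈ E, MvPolynomial.aeval u f = 0) → (∃ f ∈ N, MvPolynomial.aeval u f ≠ 0) →
        ((EuclideanDomain.gcd
              (𝒳.map (MvPolynomial.aeval u).toRingHom)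
              (Polynomial.derivative (𝒳.map (MvPolynomial.aeval u).toRingHom))).natDegree = (i : ℕ)
          ↔ ((∀ f ∈ Efam i, MvPolynomial.aeval u f = 0) ∧
              (∃ f ∈ Nfam i, MvPolynomial.aeval u f ≠ 0))) := by
  classical
  haveI : CharZero L := charZero_of_injective_algebraMap (algebraMap k L).injective
  -- minor families
  set S : ℕ → Finset (MvPolynomial (Fin m) k) := fun j =>
    Finset.image
      (fun r : (Fin (l - j) ⊕ Fin (l - j + 1)) → Fin (2 * l - j) =>
        ((sylv 𝒳 (Polynomial.derivative 𝒳) (l - j) (l - j + 1) (2 * l - j)).submatrix r id).det)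
      Finset.univ with hS
  refine ⟨fun i => if (i : ℕ) = 0 then ∅ else S i, fun i => S ((i : ℕ) + 1), ?_⟩
  intro i u hE hN
  set φ : MvPolynomial (Fin m) k →+* L := (MvPolynomial.aeval u).toRingHom with hφ
  set f : Polynomial L := 𝒳.map φ with hfdef
  set g : Polynomial L := Polynomial.derivative f with hgdef
  have hlc' : f.coeff l ≠ 0 := by
    rw [hfdef, Polynomial.coeff_map]
    exact hlc u hE hN
  have hfne : f ≠ 0 := fun h => hlc' (by rw [h, Polynomial.coeff_zero])
  have hfd : f.natDegree = l :=
    le_antisymm (Polynomial.natDegree_map_le.trans hdeg) (Polynomial.le_natDegree_of_ne_zero hlc')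
  have hgc : g.coeff (l - 1) ≠ 0 := by
    rw [hgdef, Polynomial.coeff_derivative]
    have h1 : l - 1 + 1 = l := by omega
    rw [h1]
    exact mul_ne_zero hlc' (Nat.cast_add_one_ne_zero (l - 1))
  have hgne : g ≠ 0 := fun h => hgc (by rw [h, Polynomial.coeff_zero])
  have hgd : g.natDegree = l - 1 := by
    apply le_antisymm
    · rw [hgdef]
      exact (Polynomial.natDegree_derivative_le f).trans (by omega)
    · exact Polynomial.le_natDegree_of_ne_zero hgc
  -- key characterization for 1 ≤ j ≤ l
  have key : ∀ j : ℕ, 1 ≤ j → j ≤ l →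
      ((∀ p ∈ S j, MvPolynomial.aeval u p = 0) ↔ j ≤ (EuclideanDomain.gcd f g).natDegree) := by
    intro j hj1 hjl
    have hmap : (sylv 𝒳 (Polynomial.derivative 𝒳) (l - j) (l - j + 1) (2 * l - j)).map φ
        = sylv f g (l - j) (l - j + 1) (2 * l - j) := by
      rw [sylv_map, hfdef, hgdef, Polynomial.derivative_map]
    have hsub : ∀ r : (Fin (l - j) ⊕ Fin (l - j + 1)) → Fin (2 * l - j),
        MvPolynomial.aeval u
            (((sylv 𝒳 (Polynomial.derivative 𝒳) (l - j) (l - j + 1) (2 * l - j)).submatrix r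
                id).det)
          = ((sylv f g (l - j) (l - j + 1) (2 * l - j)).submatrix r id).det := by
      intro r
      show φ _ = _
      rw [RingHom.map_det, ← hmap]
      rfl
    have h1 : (∀ p ∈ S j, MvPolynomial.aeval u p = 0)
        ↔ ∀ r : (Fin (l - j) ⊕ Fin (l - j + 1)) → Fin (2 * l - j),
            ((sylv f g (l - j) (l - j + 1) (2 * l - j)).submatrix r id).det = 0 := by
      rw [hS]
      constructor
      · intro h r
        rw [← hsub r]
        exact h _ (Finset.mem_image_of_mem _ (Finset.mem_univ r))
      · intro h p hp
        obtain ⟨r, _, rfl⟩ := Finset.mem_image.mp hp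
        rw [hsub r]
        exact h r
    rw [h1, aux_dets_zero_iff]
    exact kernel_iff_gcd_deg f g l j hfne hgne hfd hgd hl hj1 hjl
  -- conclude
  have hkey1 : ((∀ p ∈ (if (i : ℕ) = 0 then ∅ else S i), MvPolynomial.aeval u p = 0))
      ↔ (i : ℕ) ≤ (EuclideanDomain.gcd f g).natDegree := by
    by_cases h0 : (i : ℕ) = 0
    · simp [h0]
    · rw [if_neg h0]
      exact key i (by omega) (by omega) -- i ≤ l - 1 < l
  have hkey2 : ((∃ p ∈ S ((i : ℕ) + 1), MvPolynomial.aeval u p ≠ 0))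
      ↔ ¬ ((i : ℕ) + 1 ≤ (EuclideanDomain.gcd f g).natDegree) := by
    rw [← key ((i : ℕ) + 1) (by omega) (by omega)]
    constructor
    · rintro ⟨p, hp, hpne⟩ hall
      exact hpne (hall p hp)
    · intro h
      by_contra hcon
      push_neg at hcon
      exact h hcon
  rw [hkey1, hkey2]
  omega
end

section
/- Let k be a field of characteristic 0 with algebraic closure L, and let I ⊆ k[x_1,…,x_n] be an ideal. Then the quotient k[x_1,…,x_n]/I is finite-dimensional as a k-vector space if and only if the variety V_L(I) ⊆ L^n is a finite set. -/
/-!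
Write `A = k[X] ⧸ I` and `xᵢ` for the class of `Xᵢ` in `A`. Since the `xᵢ` generate `A`, it is
finite-dimensional iff every `xᵢ` is algebraic over `k`. If `pᵢ(xᵢ) = 0`, every point of `V_L(I)`
has its `i`-th coordinate among the finitely many roots of `pᵢ`. Conversely, if `V_L(I)` is finite,
the product `qᵢ` of the minimal polynomials of the `i`-th coordinates of its points vanishes on
`V_L(I)`, so by the Nullstellensatz `qᵢ(Xᵢ)ᵐ ∈ I` for some `m`, i.e. `xᵢ` is a root of `qᵢᵐ ≠ 0`.
-/

namespace MvPolynomial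

variable {σ : Type*} [Finite σ]

theorem finite_quotient_iff_isIntegral {R : Type*} [CommRing R] (I : Ideal (MvPolynomial σ R)) :
    Module.Finite R (MvPolynomial σ R ⧸ I) ↔ ∀ i, IsIntegral R (Ideal.Quotient.mk I (X i)) := by
  refine ⟨fun _ i => .of_finite R _, fun h => ?_⟩
  have hgen : Algebra.adjoin R (Set.range fun i => Ideal.Quotient.mk I (X i)) = ⊤ := by
    have : (aeval fun i => Ideal.Quotient.mk I (X i)) = Ideal.Quotient.mkₐ R I := by
      ext; simp
    rw [Algebra.adjoin_range_eq_range_aeval, this, AlgHom.range_eq_top]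
    exact Ideal.Quotient.mkₐ_surjective R I
  have : Algebra.IsIntegral R (MvPolynomial σ R ⧸ I) := by
    refine ⟨fun a => Algebra.adjoin_le (S := integralClosure R _) ?_
      (hgen ▸ Algebra.mem_top : a ∈ _)⟩
    rintro _ ⟨i, rfl⟩
    exact h i
  exact Algebra.IsIntegral.finite

variable {k K : Type*} [Field k] [Field K] [Algebra k K]

theorem finite_zeroLocus_of_isIntegral {I : Ideal (MvPolynomial σ k)}
    (h : ∀ i, IsIntegral k (Ideal.Quotient.mk I (X i))) : (zeroLocus K I).Finite := by
  choose p hp_monic hp using h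
  refine (Set.Finite.pi fun i => Polynomial.finite_setOfPred_isRoot
    ((hp_monic i).map (algebraMap k K)).ne_zero).subset fun x hx i _ => ?_
  have hpI : Polynomial.aeval (X i) (p i) ∈ I := by
    rw [← Ideal.Quotient.eq_zero_iff_mem, ← Ideal.Quotient.mkₐ_eq_mk k,
      ← Polynomial.aeval_algHom_apply, Ideal.Quotient.mkₐ_eq_mk]
    exact hp i
  have := hx _ hpI
  rw [← Polynomial.aeval_algHom_apply, aeval_X] at this
  simpa [Polynomial.eval_map_algebraMap] using this

theorem isIntegral_of_finite_zeroLocus [IsAlgClosed K] [Algebra.IsAlgebraic k K]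
    {I : Ideal (MvPolynomial σ k)} (hV : (zeroLocus K I).Finite) (i : σ) :
    IsIntegral k (Ideal.Quotient.mk I (X i)) := by
  let q : Polynomial k := ∏ a ∈ (hV.image (· i)).toFinset, minpoly k a
  have hq : q ≠ 0 := Finset.prod_ne_zero_iff.2 fun a _ =>
    minpoly.ne_zero (Algebra.IsIntegral.isIntegral a)
  have hqV : Polynomial.aeval (X i) q ∈ vanishingIdeal k (zeroLocus K I) := fun x hx => by
    rw [← Polynomial.aeval_algHom_apply, aeval_X, map_prod]
    exact Finset.prod_eq_zero (i := x i) (by simpa using ⟨x, hx, rfl⟩) (minpoly.aeval k (x i))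
  obtain ⟨m, hm⟩ := vanishingIdeal_zeroLocus_eq_radical (K := K) I ▸ hqV
  refine IsAlgebraic.isIntegral ⟨q ^ m, pow_ne_zero m hq, ?_⟩
  rw [← Ideal.Quotient.mkₐ_eq_mk k, Polynomial.aeval_algHom_apply, Ideal.Quotient.mkₐ_eq_mk,
    map_pow, Ideal.Quotient.eq_zero_iff_mem]
  exact hm

end MvPolynomial

theorem stmt_15_general (k L : Type) [Field k] [Field L] [Algebra k L]
    [IsAlgClosure k L] (n : ℕ) (I : Ideal (MvPolynomial (Fin n) k)) :
    FiniteDimensional k (MvPolynomial (Fin n) k ⧸ I)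
      ↔ {p : Fin n → L | ∀ f ∈ I, MvPolynomial.aeval p f = 0}.Finite := by
  have := IsAlgClosure.isAlgClosed k (K := L)
  have := IsAlgClosure.isAlgebraic (R := k) (K := L)
  exact (MvPolynomial.finite_quotient_iff_isIntegral I).trans
    ⟨MvPolynomial.finite_zeroLocus_of_isIntegral, MvPolynomial.isIntegral_of_finite_zeroLocus⟩

/-- Finiteness Theorem: for an ideal `I ⊆ k[x_1,…,x_n]` over a field `k`
of characteristic 0 with algebraic closure `L`, the quotient `k[X]/I` is finite-dimensional
over `k` iff the variety `V_L(I) ⊆ L^n` is finite. -/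
theorem stmt_15 (k L : Type) [Field k] [CharZero k] [Field L] [Algebra k L]
    [IsAlgClosure k L] (n : ℕ) (I : Ideal (MvPolynomial (Fin n) k)) :
    FiniteDimensional k (MvPolynomial (Fin n) k ⧸ I)
      ↔ {p : Fin n → L | ∀ f ∈ I, MvPolynomial.aeval p f = 0}.Finite :=
  stmt_15_general k L n I
end

section
/- Let k be a field of characteristic 0 with algebraic closure L, let U = (u_1,…,u_m) be parameters, and let f_1,…,f_l ∈ k[U][x] be univariate polynomials in x with coefficients in k[U]. Then there exists a parametric GCD of {f_1,…,f_l} on L^m: a finite set {(E_1,N_1,g_1),…,(E_r,N_r,g_r)} with E_i, N_i finite subsets of k[U] and g_i ∈ k[U][x], such that L^m = ⋃_{i=1}^{r} V_L(E_i)∖V_L(N_i) and for each i and every ū ∈ V_L(E_i)∖V_L(N_i), the specialization g_i(ū,x) ∈ L[x] is a greatest common divisor of f_1(ū,x),…,f_l(ū,x) in L[x]. -/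
open Polynomial

namespace Stmt16

open scoped Classical

variable {A L : Type} [CommRing A] [IsDomain A] [Field L]

/-- measure of a single polynomial -/
noncomputable def nu (p : A[X]) : ℕ := if p = 0 then 0 else p.natDegree + 1

/-- measure of a family -/
noncomputable def mu {l : ℕ} (F : Fin l → A[X]) : ℕ := ∑ j, nu (F j)

/-- branch condition: all of `E` vanish, some element of `N` does not vanish -/
def Cond (φ : A →+* L) (t : Finset A × Finset A × A[X]) : Prop :=
  (∀ h ∈ t.1, φ h = 0) ∧ (∃ h ∈ t.2.1, φ h ≠ 0)

/-- `g` specializes to a gcd of the specializations of `F` -/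
def GcdProp {l : ℕ} (φ : A →+* L) (F : Fin l → A[X]) (g : A[X]) : Prop :=
  (∀ j, g.map φ ∣ (F j).map φ) ∧ ∀ e : L[X], (∀ j, e ∣ (F j).map φ) → e ∣ g.map φ

/-- `T` is a parametric gcd system for `F` -/
def Good (L : Type) [Field L] {l : ℕ} (F : Fin l → A[X])
    (T : List (Finset A × Finset A × A[X])) : Prop :=
  (∀ φ : A →+* L, ∃ t ∈ T, Cond φ t) ∧
  (∀ t ∈ T, ∀ φ : A →+* L, Cond φ t → GcdProp φ F t.2.2)

lemma gcdProp_congr {l : ℕ} (φ : A →+* L) (F F' : Fin l → A[X])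
    (h : ∀ e : L[X], (∀ j, e ∣ (F j).map φ) ↔ (∀ j, e ∣ (F' j).map φ)) (g : A[X]) :
    GcdProp φ F' g → GcdProp φ F g := by
  rintro ⟨h1, h2⟩
  exact ⟨(h (g.map φ)).mpr h1, fun e he => h2 e ((h e).mp he)⟩

lemma nu_eraseLead_lt {p : A[X]} (hp : p ≠ 0) : nu p.eraseLead < nu p := by
  by_cases h0 : p.eraseLead = 0
  · simp [nu, h0, hp]
  · rcases p.eraseLead_natDegree_lt_or_eraseLead_eq_zero with h | h
    · simp only [nu, if_neg h0, if_neg hp]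
      omega
    · exact absurd h h0

lemma nu_lt_of_degree_lt {p q : A[X]} (hq : q ≠ 0) (h : p.degree < q.degree) :
    nu p < nu q := by
  by_cases h0 : p = 0
  · simp [nu, h0, hq]
  · simp only [nu, h0, hq, if_neg, if_false]
    have := natDegree_lt_natDegree h0 h
    omega

lemma mu_update_lt {l : ℕ} (F : Fin l → A[X]) (j : Fin l) (p : A[X])
    (h : nu p < nu (F j)) : mu (Function.update F j p) < mu F := by
  refine Finset.sum_lt_sum (fun i _ => ?_) ⟨j, Finset.mem_univ j, ?_⟩
  · by_cases hij : i = j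
    · subst hij; simp [h.le]
    · simp [Function.update_of_ne hij]
  · simpa using h

/-- Main inductive lemma: every finite family has a parametric gcd system. -/
lemma exists_good (L : Type) [Field L] {l : ℕ} (F : Fin l → A[X]) :
    ∃ T, Good (A := A) L F T := by
  generalize hn : mu F = n
  induction n using Nat.strong_induction_on generalizing F with
  | _ n ih =>
  by_cases hall : ∀ j, F j = 0
  · -- all polynomials are zero: g = 0 everywhere
    refine ⟨[(∅, {1}, 0)], fun φ => ⟨_, List.mem_singleton_self _, ?_, ⟨1, by simp⟩⟩, ?_⟩
    · intro h hh; simp at hh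
    · intro t ht φ _
      simp only [List.mem_singleton] at ht
      subst ht
      constructor
      · intro j; simp [hall j]
      · intro e _; simp
  · push_neg at hall
    -- choose a nonzero polynomial of minimal degree
    have hS : (Finset.univ.filter (fun j => F j ≠ 0)).Nonempty := by
      obtain ⟨j, hj⟩ := hall
      exact ⟨j, by simp [hj]⟩
    obtain ⟨j0, hj0mem, hj0min⟩ :=
      Finset.exists_min_image _ (fun j => (F j).natDegree) hS
    have hj0 : F j0 ≠ 0 := by simpa using hj0mem
    set c : A := (F j0).leadingCoeff with hcdef
    have hc : c ≠ 0 := leadingCoeff_ne_zero.mpr hj0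
    by_cases hone : ∀ j, j ≠ j0 → F j = 0
    · -- only one nonzero polynomial: it is the gcd everywhere
      refine ⟨[(∅, {1}, F j0)], fun φ => ⟨_, List.mem_singleton_self _, ?_, ⟨1, by simp⟩⟩, ?_⟩
      · intro h hh; simp at hh
      · intro t ht φ _
        simp only [List.mem_singleton] at ht
        subst ht
        constructor
        · intro j
          by_cases hj : j = j0
          · subst hj; exact dvd_rfl
          · simp [hone j hj]
        · intro e he; exact he j0
    · push_neg at hone
      obtain ⟨j1, hj1ne, hj1⟩ := hone
      set d : ℕ := (F j0).natDegree with hddef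
      have hdle : d ≤ (F j1).natDegree := hj0min j1 (by simp [hj1])
      set q : A[X] := F j1 with hqdef
      set p' : A[X] :=
        C c * q - C q.leadingCoeff * X ^ (q.natDegree - d) * F j0 with hp'def
      -- branch A : leading coefficient vanishes
      set FA := Function.update F j0 (F j0).eraseLead with hFAdef
      -- branch B : leading coefficient does not vanish — one reduction step
      set FB := Function.update F j1 p' with hFBdef
      have hmuA : mu FA < n := hn ▸ mu_update_lt F j0 _ (nu_eraseLead_lt hj0)
      have hdegp' : p'.degree < q.degree := by
        have h1 : (C c * q).degree = q.degree := degree_C_mul hc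
        have h2 : (C q.leadingCoeff * X ^ (q.natDegree - d) * F j0).degree = q.degree := by
          rw [mul_assoc, degree_mul, degree_mul, degree_C (leadingCoeff_ne_zero.mpr hj1),
            degree_X_pow, degree_eq_natDegree hj0, degree_eq_natDegree hj1]
          rw [← hddef]
          norm_cast
          omega
        have h3 : (C c * q).leadingCoeff =
            (C q.leadingCoeff * X ^ (q.natDegree - d) * F j0).leadingCoeff := by
          rw [leadingCoeff_mul, leadingCoeff_mul, leadingCoeff_mul, leadingCoeff_C,
            leadingCoeff_C, leadingCoeff_X_pow, ← hcdef, mul_one, mul_comm]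
        have := degree_sub_lt (h1.trans h2.symm) (by
          apply mul_ne_zero _ hj1
          simpa using hc) h3
        rwa [← hp'def, h1] at this
      have hmuB : mu FB < n := hn ▸ mu_update_lt F j1 _ (nu_lt_of_degree_lt hj1 hdegp')
      obtain ⟨TA, hTAcov, hTAcor⟩ := ih (mu FA) hmuA FA rfl
      obtain ⟨TB, hTBcov, hTBcor⟩ := ih (mu FB) hmuB FB rfl
      refine ⟨(TA.map fun t => (insert c t.1, t.2.1, t.2.2)) ++
              (TB.map fun t => (t.1, t.2.1.image (fun h => c * h), t.2.2)), ?_, ?_⟩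
      · -- covering
        intro φ
        by_cases hφc : φ c = 0
        · obtain ⟨t, ht, hE, hN⟩ := hTAcov φ
          refine ⟨(insert c t.1, t.2.1, t.2.2),
            List.mem_append_left _ (List.mem_map_of_mem ht), ?_, hN⟩
          intro h hh
          rcases Finset.mem_insert.mp hh with rfl | hh
          · exact hφc
          · exact hE h hh
        · obtain ⟨t, ht, hE, h0, hh0, hh0ne⟩ := hTBcov φ
          exact ⟨(t.1, t.2.1.image (fun h => c * h), t.2.2),
            List.mem_append_right _ (List.mem_map_of_mem ht), hE,
            ⟨c * h0, Finset.mem_image_of_mem _ hh0, by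
              rw [map_mul]; exact mul_ne_zero hφc hh0ne⟩⟩
      · -- correctness
        intro t' ht' φ hcond
        rcases List.mem_append.mp ht' with hmem | hmem
        · -- from branch A
          obtain ⟨t, ht, rfl⟩ := List.mem_map.mp hmem
          obtain ⟨hE, hN⟩ := hcond
          have hφc : φ c = 0 := hE c (Finset.mem_insert_self _ _)
          have hcondt : Cond φ t := ⟨fun h hh => hE h (Finset.mem_insert_of_mem hh), hN⟩
          refine gcdProp_congr φ F FA ?_ _ (hTAcor t ht φ hcondt)
          have hmap : ∀ j, (FA j).map φ = (F j).map φ := by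
            intro j
            by_cases hj : j = j0
            · rw [hj, hFAdef, Function.update_self]
              conv_rhs => rw [← eraseLead_add_C_mul_X_pow (F j0)]
              rw [Polynomial.map_add, Polynomial.map_mul, Polynomial.map_pow, map_C, map_X,
                ← hcdef, hφc, map_zero, zero_mul, add_zero]
            · rw [hFAdef, Function.update_of_ne hj]
          intro e
          constructor
          · intro he j; rw [hmap j]; exact he j
          · intro he j; rw [← hmap j]; exact he j
        · -- from branch B
          obtain ⟨t, ht, rfl⟩ := List.mem_map.mp hmem
          obtain ⟨hE, h', hh', hh'ne⟩ := hcond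
          obtain ⟨h0, hh0, rfl⟩ := Finset.mem_image.mp hh'
          rw [map_mul] at hh'ne
          have hφc : φ c ≠ 0 := left_ne_zero_of_mul hh'ne
          have hcondt : Cond φ t := ⟨hE, h0, hh0, right_ne_zero_of_mul hh'ne⟩
          refine gcdProp_congr φ F FB ?_ _ (hTBcor t ht φ hcondt)
          have hFBj : ∀ j, j ≠ j1 → FB j = F j := fun j hj => Function.update_of_ne hj _ _
          have hFBj1 : FB j1 = p' := Function.update_self _ _ _
          have hmapp' : p'.map φ =
              C (φ c) * (q.map φ) -
                C (φ q.leadingCoeff) * X ^ (q.natDegree - d) * ((F j0).map φ) := by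
            rw [hp'def, Polynomial.map_sub, Polynomial.map_mul, Polynomial.map_mul,
              Polynomial.map_mul, Polynomial.map_pow, map_C, map_C, map_X]
          intro e
          have hj01 : j0 ≠ j1 := fun h => hj1ne h.symm
          constructor
          · -- common divisors of F are common divisors of FB
            intro he j
            by_cases hj : j = j1
            · rw [hj, hFBj1, hmapp']
              exact dvd_sub ((he j1).mul_left _) (((he j0)).mul_left _)
            · rw [hFBj j hj]; exact he j
          · -- common divisors of FB are common divisors of F
            intro he j
            by_cases hj : j = j1
            · rw [hj]
              have h1 : e ∣ (F j0).map φ := by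
                have := he j0; rwa [hFBj j0 hj01] at this
              have h2 : e ∣ p'.map φ := by have := he j1; rwa [hFBj1] at this
              have h3 : e ∣ C (φ c) * (q.map φ) := by
                have : C (φ c) * (q.map φ) =
                    p'.map φ +
                      C (φ q.leadingCoeff) * X ^ (q.natDegree - d) * ((F j0).map φ) := by
                  rw [hmapp']; ring
                rw [this]
                exact dvd_add h2 (h1.mul_left _)
              have h4 : (C (φ c)⁻¹ : L[X]) * (C (φ c) * (q.map φ)) = q.map φ := by
                rw [← mul_assoc, ← C_mul, inv_mul_cancel₀ hφc, C_1, one_mul]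
              calc e ∣ C (φ c)⁻¹ * (C (φ c) * (q.map φ)) := h3.mul_left _
                _ = q.map φ := h4
            · rw [← hFBj j hj]; exact he j

end Stmt16

/-- existence of parametric GCDs: for univariate polynomials
`f_1,…,f_l ∈ k[U][x]`, there is a parametric GCD of `{f_1,…,f_l}` on `L^m`: finitely many
branches `V_L(E_i)∖V_L(N_i)` covering `L^m`, carrying `g_i ∈ k[U][x]` such that for each
`u` in the branch, the specialization `g_i(u,x)` is a greatest common divisor of
`f_1(u,x),…,f_l(u,x)` in `L[x]`. -/
theorem stmt_16 (k L : Type) [Field k] [CharZero k] [Field L] [Algebra k L]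
    [IsAlgClosure k L] (m l : ℕ) (f : Fin l → Polynomial (MvPolynomial (Fin m) k)) :
    ∃ (r : ℕ) (Es Ns : Fin r → Finset (MvPolynomial (Fin m) k))
      (gs : Fin r → Polynomial (MvPolynomial (Fin m) k)),
      (∀ u : Fin m → L,
        ∃ i : Fin r, (∀ h ∈ Es i, MvPolynomial.aeval u h = 0) ∧
          (∃ h ∈ Ns i, MvPolynomial.aeval u h ≠ 0)) ∧
      (∀ (i : Fin r) (u : Fin m → L),
        (∀ h ∈ Es i, MvPolynomial.aeval u h = 0) → (∃ h ∈ Ns i, MvPolynomial.aeval u h ≠ 0) →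
        (∀ j : Fin l, (gs i).map (MvPolynomial.aeval u).toRingHom
            ∣ (f j).map (MvPolynomial.aeval u).toRingHom) ∧
          ∀ e : Polynomial L,
            (∀ j : Fin l, e ∣ (f j).map (MvPolynomial.aeval u).toRingHom) →
            e ∣ (gs i).map (MvPolynomial.aeval u).toRingHom) := by
  obtain ⟨T, hcov, hcor⟩ := Stmt16.exists_good (A := MvPolynomial (Fin m) k) L f
  refine ⟨T.length, fun i => (T.get i).1, fun i => (T.get i).2.1, fun i => (T.get i).2.2, ?_, ?_⟩
  · intro u
    obtain ⟨t, ht, hE, hN⟩ := hcov (MvPolynomial.aeval u).toRingHom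
    obtain ⟨i, rfl⟩ := List.mem_iff_get.mp ht
    exact ⟨i, hE, hN⟩
  · intro i u hE hN
    exact hcor (T.get i) (T.get_mem i) (MvPolynomial.aeval u).toRingHom ⟨hE, hN⟩
end
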